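/- arXiv:1803.06984 — 3 statements merged into one kernel-verified Lean document; each statement's English description precedes it below -/
import Mathlib

section
/- The number of extreme points of P_Γ (the integer-budget polytope above) equals Σ_{j=0}^{Γ} C(M, j) · 2^j; in particular for Γ = 1 it is 2M + 1 (including the origin), and the number of {0,1}-points with exactly the budget constraints tight equals C(M,Γ)·2^Γ. -/
open Finset
namespace BPEC
variable {M Γ : ℕ}

def U (t : (Fin M → ℝ) × (Fin M → ℝ)) : Fin M × Bool → ℝ :=
  fun e => if e.2 then t.1 e.1 else t.2 e.1
def fromU (u : Fin M × Bool → ℝ) : (Fin M → ℝ) × (Fin M → ℝ) :=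
  (fun j => u (j, true), fun j => u (j, false))
lemma U_fromU (u : Fin M × Bool → ℝ) : U (fromU u) = u := by
  funext e; obtain ⟨j, b⟩ := e; cases b <;> rfl
lemma fromU_U (t : (Fin M → ℝ) × (Fin M → ℝ)) : fromU (U t) = t := by
  obtain ⟨a, b⟩ := t; rfl
lemma sum_U (t : (Fin M → ℝ) × (Fin M → ℝ)) :
    ∑ e : Fin M × Bool, U t e = ∑ j, (t.1 j + t.2 j) := by
  rw [Fintype.sum_prod_type]
  refine Finset.sum_congr rfl fun j _ => ?_
  rw [Fintype.sum_bool]; rfl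
def Pset (M Γ : ℕ) : Set ((Fin M → ℝ) × (Fin M → ℝ)) :=
  {t | (∀ j, t.1 j ∈ Set.Icc (0:ℝ) 1) ∧ (∀ j, t.2 j ∈ Set.Icc (0:ℝ) 1) ∧
      (∀ j, t.1 j + t.2 j ≤ 1) ∧ (∑ j, (t.1 j + t.2 j)) ≤ (Γ : ℝ)}
lemma mem_Pset_iff (x : (Fin M → ℝ) × (Fin M → ℝ)) :
    x ∈ Pset M Γ ↔ (∀ e, 0 ≤ U x e ∧ U x e ≤ 1) ∧
      (∀ j, U x (j, true) + U x (j, false) ≤ 1) ∧ ∑ e : Fin M × Bool, U x e ≤ (Γ : ℝ) := by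
  constructor
  · rintro ⟨h1, h2, h3, h4⟩
    refine ⟨fun e => ?_, fun j => h3 j, ?_⟩
    · obtain ⟨j, b⟩ := e; cases b
      · exact ⟨(h2 j).1, (h2 j).2⟩
      · exact ⟨(h1 j).1, (h1 j).2⟩
    · rw [sum_U]; exact h4
  · rintro ⟨h1, h2, h3⟩
    refine ⟨fun j => ⟨(h1 (j, true)).1, (h1 (j, true)).2⟩,
      fun j => ⟨(h1 (j, false)).1, (h1 (j, false)).2⟩, h2, ?_⟩
    rw [← sum_U]; exact h3

lemma mem_Pset_of (u : Fin M × Bool → ℝ) (hent : ∀ e, 0 ≤ u e ∧ u e ≤ 1)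
    (hpair : ∀ j, u (j, true) + u (j, false) ≤ 1)
    (hsum : ∑ e : Fin M × Bool, u e ≤ (Γ : ℝ)) : fromU u ∈ Pset M Γ := by
  rw [mem_Pset_iff, U_fromU]; exact ⟨hent, hpair, hsum⟩

def dfun (e₀ e₁ : Fin M × Bool) (ε : ℝ) : Fin M × Bool → ℝ :=
  fun e => (if e = e₀ then ε else 0) - (if e = e₁ then ε else 0)

lemma pert_mem (t : (Fin M → ℝ) × (Fin M → ℝ)) (ht : t ∈ Pset M Γ)
    (e₀ e₁ : Fin M × Bool) (hne : e₀ ≠ e₁) (ε : ℝ) (hε : 0 < ε)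
    (h0 : U t e₀ + ε ≤ 1) (h1 : ε ≤ U t e₁)
    (hps : e₀.1 = e₁.1 ∨ U t (e₀.1, true) + U t (e₀.1, false) + ε ≤ 1) :
    fromU (U t + dfun e₀ e₁ ε) ∈ Pset M Γ := by
  obtain ⟨hent, hpair, hsum⟩ := (mem_Pset_iff t).1 ht
  refine mem_Pset_of _ ?_ ?_ ?_
  · intro e
    by_cases he0 : e = e₀
    · subst he0
      have h := hent e
      simp only [Pi.add_apply, dfun]
      simp [hne]
      constructor <;> linarith
    · by_cases he1 : e = e₁
      · subst he1
        have h := hent e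
        simp only [Pi.add_apply, dfun]
        simp [he0]
        constructor <;> linarith
      · have h := hent e
        simp only [Pi.add_apply, dfun]
        simp [he0, he1]
        constructor <;> linarith
  · intro j
    have hpj := hpair j
    obtain ⟨j₀, b₀⟩ := e₀
    obtain ⟨j₁, b₁⟩ := e₁
    have hps' : j₀ = j₁ ∨ U t (j₀, true) + U t (j₀, false) + ε ≤ 1 := hps
    clear hps
    simp only [Pi.add_apply, dfun]
    by_cases hj0 : j = j₀
    · by_cases hj1 : j = j₁
      · cases b₀ <;> cases b₁ <;>
          simp_all <;> linarith [hpair j, hpair j₀, hpair j₁, hε]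
      · have hkey : U t (j₀, true) + U t (j₀, false) + ε ≤ 1 := by
          rcases hps' with h | h
          · exact absurd (hj0.trans h) hj1
          · exact h
        cases b₀ <;>
          simp_all <;> linarith [hpair j, hpair j₀, hpair j₁, hε]
    · by_cases hj1 : j = j₁
      · cases b₁ <;>
          simp_all <;> linarith [hpair j, hpair j₀, hpair j₁, hε]
      · simp_all
  · have hs : ∑ e : Fin M × Bool, (U t + dfun e₀ e₁ ε) e
        = ∑ e : Fin M × Bool, U t e + (ε - ε) := by
      simp only [Pi.add_apply, dfun, Finset.sum_add_distrib, Finset.sum_sub_distrib]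
      rw [Finset.sum_ite_eq' univ e₀ fun _ => ε, Finset.sum_ite_eq' univ e₁ fun _ => ε]
      simp
    rw [hs]; simpa using hsum


def sgl (e₀ : Fin M × Bool) (ε : ℝ) : Fin M × Bool → ℝ := fun e => if e = e₀ then ε else 0

lemma pert_mem_one_plus (t : (Fin M → ℝ) × (Fin M → ℝ)) (ht : t ∈ Pset M Γ)
    (e₀ : Fin M × Bool) (ε : ℝ) (hε : 0 < ε) (h0 : U t e₀ + ε ≤ 1)
    (hps : U t (e₀.1, true) + U t (e₀.1, false) + ε ≤ 1)
    (hsum : ∑ e : Fin M × Bool, U t e + ε ≤ (Γ : ℝ)) :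
    fromU (U t + sgl e₀ ε) ∈ Pset M Γ := by
  obtain ⟨hent, hpair, hsums⟩ := (mem_Pset_iff t).1 ht
  refine mem_Pset_of _ ?_ ?_ ?_
  · intro e
    by_cases he0 : e = e₀
    · subst he0
      have h := hent e
      simp only [Pi.add_apply, sgl]
      simp
      constructor <;> linarith
    · have h := hent e
      simp only [Pi.add_apply, sgl]
      simp [he0]
      constructor <;> linarith
  · intro j
    have hpj := hpair j
    obtain ⟨j₀, b₀⟩ := e₀
    simp only [Pi.add_apply, sgl]
    by_cases hj0 : j = j₀
    · cases b₀ <;> simp_all <;> linarith [hpair j, hpair j₀, hε]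
    · simp_all
  · have hs : ∑ e : Fin M × Bool, (U t + sgl e₀ ε) e
        = ∑ e : Fin M × Bool, U t e + ε := by
      simp only [Pi.add_apply, sgl, Finset.sum_add_distrib]
      rw [Finset.sum_ite_eq' univ e₀ fun _ => ε]
      simp
    rw [hs]; exact hsum

lemma pert_mem_one_minus (t : (Fin M → ℝ) × (Fin M → ℝ)) (ht : t ∈ Pset M Γ)
    (e₀ : Fin M × Bool) (ε : ℝ) (hε : 0 < ε) (h0 : ε ≤ U t e₀) :
    fromU (U t - sgl e₀ ε) ∈ Pset M Γ := by
  obtain ⟨hent, hpair, hsums⟩ := (mem_Pset_iff t).1 ht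
  refine mem_Pset_of _ ?_ ?_ ?_
  · intro e
    by_cases he0 : e = e₀
    · subst he0
      have h := hent e
      simp only [Pi.sub_apply, sgl]
      simp
      constructor <;> linarith
    · have h := hent e
      simp only [Pi.sub_apply, sgl]
      simp [he0]
      constructor <;> linarith
  · intro j
    have hpj := hpair j
    obtain ⟨j₀, b₀⟩ := e₀
    simp only [Pi.sub_apply, sgl]
    by_cases hj0 : j = j₀
    · cases b₀ <;> simp_all <;> linarith [hpair j, hpair j₀, hε]
    · simp_all
  · have hs : ∑ e : Fin M × Bool, (U t - sgl e₀ ε) e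
        = ∑ e : Fin M × Bool, U t e - ε := by
      simp only [Pi.sub_apply, sgl, Finset.sum_sub_distrib]
      rw [Finset.sum_ite_eq' univ e₀ fun _ => ε]
      simp
    rw [hs]; linarith

lemma not_extreme_of_pert {P : Set ((Fin M → ℝ) × (Fin M → ℝ))}
    (t : (Fin M → ℝ) × (Fin M → ℝ)) (d : Fin M × Bool → ℝ) (hd : d ≠ 0)
    (h₁ : fromU (U t - d) ∈ P) (h₂ : fromU (U t + d) ∈ P) :
    t ∉ Set.extremePoints ℝ P := by
  intro hext
  have hseg : t ∈ openSegment ℝ (fromU (U t - d)) (fromU (U t + d)) := by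
    refine ⟨1/2, 1/2, by norm_num, by norm_num, by norm_num, ?_⟩
    have h1 : ∀ u v : Fin M × Bool → ℝ,
        (1/2 : ℝ) • fromU u + (1/2 : ℝ) • fromU v = fromU ((1/2 : ℝ) • u + (1/2 : ℝ) • v) := by
      intro u v; rfl
    rw [h1]
    have h2 : (1/2 : ℝ) • (U t - d) + (1/2 : ℝ) • (U t + d) = U t := by
      funext e; simp; ring
    rw [h2, fromU_U]
  have heq := hext.2 h₁ h₂ hseg
  apply hd
  have heq2 := congrArg U heq
  rw [U_fromU] at heq2
  funext e
  have h3 := congrFun heq2 e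
  simp only [Pi.sub_apply, U] at h3 ⊢
  have h0 : U t e - d e = U t e := h3
  simpa using (by linarith [h0] : d e = 0)

lemma not_extreme_pair (t : (Fin M → ℝ) × (Fin M → ℝ)) (ht : t ∈ Pset M Γ)
    (e₀ e₁ : Fin M × Bool) (hne : e₀ ≠ e₁)
    (hf₀ : 0 < U t e₀ ∧ U t e₀ < 1) (hf₁ : 0 < U t e₁ ∧ U t e₁ < 1)
    (hps₀ : e₀.1 = e₁.1 ∨ U t (e₀.1, true) + U t (e₀.1, false) < 1)
    (hps₁ : e₀.1 = e₁.1 ∨ U t (e₁.1, true) + U t (e₁.1, false) < 1) :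
    t ∉ Set.extremePoints ℝ (Pset M Γ) := by
  classical
  set ps : Fin M → ℝ := fun j => U t (j, true) + U t (j, false) with hpsdef
  set slack : ℝ := if e₀.1 = e₁.1 then 1 else min (1 - ps e₀.1) (1 - ps e₁.1) with hslack
  have hslackpos : 0 < slack := by
    rw [hslack]
    split_ifs with h
    · norm_num
    · rcases hps₀ with h0 | h0
      · exact absurd h0 h
      · rcases hps₁ with h1 | h1
        · exact absurd h1 h
        · exact lt_min (by simp only [hpsdef]; linarith) (by simp only [hpsdef]; linarith)
  set ε : ℝ := min (min (U t e₀) (1 - U t e₀)) (min (min (U t e₁) (1 - U t e₁)) slack) with hεdef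
  have hε : 0 < ε := by
    refine lt_min (lt_min hf₀.1 (by linarith [hf₀.2])) (lt_min (lt_min hf₁.1 (by linarith [hf₁.2])) hslackpos)
  have hε00 : ε ≤ U t e₀ := le_trans (min_le_left _ _) (min_le_left _ _)
  have hε01 : ε ≤ 1 - U t e₀ := le_trans (min_le_left _ _) (min_le_right _ _)
  have hε10 : ε ≤ U t e₁ := le_trans (min_le_right _ _) (le_trans (min_le_left _ _) (min_le_left _ _))
  have hε11 : ε ≤ 1 - U t e₁ := le_trans (min_le_right _ _) (le_trans (min_le_left _ _) (min_le_right _ _))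
  have hεsl : ε ≤ slack := le_trans (min_le_right _ _) (min_le_right _ _)
  have hkey₀ : e₀.1 = e₁.1 ∨ U t (e₀.1, true) + U t (e₀.1, false) + ε ≤ 1 := by
    by_cases h : e₀.1 = e₁.1
    · exact Or.inl h
    · right
      have : slack ≤ 1 - ps e₀.1 := by rw [hslack, if_neg h]; exact min_le_left _ _
      have := le_trans hεsl this
      simp only [hpsdef] at this
      linarith
  have hkey₁ : e₁.1 = e₀.1 ∨ U t (e₁.1, true) + U t (e₁.1, false) + ε ≤ 1 := by
    by_cases h : e₀.1 = e₁.1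
    · exact Or.inl h.symm
    · right
      have : slack ≤ 1 - ps e₁.1 := by rw [hslack, if_neg h]; exact min_le_right _ _
      have := le_trans hεsl this
      simp only [hpsdef] at this
      linarith
  refine not_extreme_of_pert t (dfun e₀ e₁ ε) ?_ ?_ ?_
  · intro h
    have := congrFun h e₀
    simp [dfun, hne] at this
    linarith
  · have hrw : U t - dfun e₀ e₁ ε = U t + dfun e₁ e₀ ε := by
      funext e; simp [dfun]; ring
    rw [hrw]
    exact pert_mem t ht e₁ e₀ hne.symm ε hε (by linarith) (by linarith) hkey₁
  · exact pert_mem t ht e₀ e₁ hne ε hε (by linarith) (by linarith) hkey₀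

lemma not_extreme_single (t : (Fin M → ℝ) × (Fin M → ℝ)) (ht : t ∈ Pset M Γ)
    (e₀ : Fin M × Bool) (hf : 0 < U t e₀ ∧ U t e₀ < 1)
    (hps : U t (e₀.1, true) + U t (e₀.1, false) < 1)
    (hsum : ∑ e : Fin M × Bool, U t e < (Γ : ℝ)) :
    t ∉ Set.extremePoints ℝ (Pset M Γ) := by
  set ε : ℝ := min (min (U t e₀) (1 - U t e₀))
    (min (1 - (U t (e₀.1, true) + U t (e₀.1, false))) ((Γ : ℝ) - ∑ e : Fin M × Bool, U t e)) with hεdef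
  have hε : 0 < ε := by
    refine lt_min (lt_min hf.1 (by linarith [hf.2])) (lt_min (by linarith) (by linarith))
  have hε0 : ε ≤ U t e₀ := le_trans (min_le_left _ _) (min_le_left _ _)
  have hε1 : ε ≤ 1 - U t e₀ := le_trans (min_le_left _ _) (min_le_right _ _)
  have hε2 : ε ≤ 1 - (U t (e₀.1, true) + U t (e₀.1, false)) := le_trans (min_le_right _ _) (min_le_left _ _)
  have hε3 : ε ≤ (Γ : ℝ) - ∑ e : Fin M × Bool, U t e := le_trans (min_le_right _ _) (min_le_right _ _)
  refine not_extreme_of_pert t (sgl e₀ ε) ?_ ?_ ?_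
  · intro h
    have := congrFun h e₀
    simp [sgl] at this
    linarith
  · exact pert_mem_one_minus t ht e₀ ε hε hε0
  · exact pert_mem_one_plus t ht e₀ ε hε (by linarith) (by linarith) (by linarith)


lemma exists_int_sum {α : Type*} [DecidableEq α] (s : Finset α) (f : α → ℝ)
    (h : ∀ e ∈ s, f e = 0 ∨ f e = 1) : ∃ n : ℤ, ∑ e ∈ s, f e = (n : ℝ) := by
  induction s using Finset.cons_induction with
  | empty => exact ⟨0, by simp⟩
  | cons a s ha ih =>
    obtain ⟨n, hn⟩ := ih fun e he => h e (Finset.mem_cons_of_mem he)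
    rcases h a (Finset.mem_cons_self a s) with h0 | h0
    · exact ⟨n, by rw [Finset.sum_cons, h0, hn]; ring⟩
    · exact ⟨n + 1, by rw [Finset.sum_cons, h0, hn]; push_cast; ring⟩

lemma pair_eq (t : (Fin M → ℝ) × (Fin M → ℝ)) (e : Fin M × Bool) :
    U t (e.1, true) + U t (e.1, false) = U t e + U t (e.1, !e.2) := by
  obtain ⟨j, b⟩ := e; cases b <;> simp [U] <;> ring

lemma partner_ne (e : Fin M × Bool) : e ≠ (e.1, !e.2) := by
  obtain ⟨j, b⟩ := e; cases b <;> simp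

lemma extreme_01 (t : (Fin M → ℝ) × (Fin M → ℝ))
    (hext : t ∈ Set.extremePoints ℝ (Pset M Γ)) : ∀ e, U t e = 0 ∨ U t e = 1 := by
  classical
  have ht := hext.1
  obtain ⟨hent, hpair, hsum⟩ := (mem_Pset_iff t).1 ht
  by_contra hcon
  push_neg at hcon
  obtain ⟨e₀, he0, he1⟩ := hcon
  have hf : 0 < U t e₀ ∧ U t e₀ < 1 :=
    ⟨lt_of_le_of_ne (hent e₀).1 (Ne.symm he0), lt_of_le_of_ne (hent e₀).2 he1⟩
  have hfr01 : ∀ e : Fin M × Bool, ¬(0 < U t e ∧ U t e < 1) → U t e = 0 ∨ U t e = 1 := by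
    intro e he
    rcases eq_or_lt_of_le (hent e).1 with h | h
    · exact Or.inl h.symm
    · rcases eq_or_lt_of_le (hent e).2 with h2 | h2
      · exact Or.inr h2
      · exact absurd ⟨h, h2⟩ he
  by_cases hp : 0 < U t (e₀.1, !e₀.2) ∧ U t (e₀.1, !e₀.2) < 1
  · exact not_extreme_pair t ht e₀ (e₀.1, !e₀.2) (partner_ne e₀) hf hp
      (Or.inl rfl) (Or.inl rfl) hext
  · have hpv : U t (e₀.1, !e₀.2) = 0 := by
      rcases hfr01 _ hp with h | h
      · exact h
      · exfalso
        have := hpair e₀.1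
        rw [pair_eq t e₀, h] at this
        linarith [hf.1]
    have hps0 : U t (e₀.1, true) + U t (e₀.1, false) < 1 := by
      rw [pair_eq t e₀, hpv]
      linarith [hf.2]
    by_cases hsl : ∑ e : Fin M × Bool, U t e < (Γ : ℝ)
    · exact not_extreme_single t ht e₀ hf hps0 hsl hext
    · have hseq : ∑ e : Fin M × Bool, U t e = (Γ : ℝ) := le_antisymm hsum (not_lt.1 hsl)
      have h2 : ∃ e₁ : Fin M × Bool, e₁.1 ≠ e₀.1 ∧ 0 < U t e₁ ∧ U t e₁ < 1 := by
        by_contra hno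
        push_neg at hno
        have hall : ∀ e ∈ Finset.univ.erase e₀, U t e = (0:ℝ) ∨ U t e = 1 := by
          intro e he
          rw [Finset.mem_erase] at he
          by_cases hc : e.1 = e₀.1
          · have he2 : e.2 = !e₀.2 := by
              have : e.2 ≠ e₀.2 := by
                intro h
                exact he.1 (Prod.ext hc h)
              cases hb : e.2 <;> cases hb0 : e₀.2 <;> simp_all
            have : e = (e₀.1, !e₀.2) := Prod.ext hc he2
            rw [this, hpv]
            exact Or.inl rfl
          · apply hfr01
            intro hfe
            exact absurd (hno e hc hfe.1) (not_le.2 hfe.2)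
        obtain ⟨n, hn⟩ := exists_int_sum _ _ hall
        have hsplit : ∑ e : Fin M × Bool, U t e
            = U t e₀ + ∑ e ∈ Finset.univ.erase e₀, U t e :=
          (Finset.add_sum_erase Finset.univ _ (Finset.mem_univ e₀)).symm
        have hval : U t e₀ = ((Γ : ℤ) - n : ℤ) := by
          rw [hsplit, hn] at hseq
          push_cast
          linarith
        set k : ℤ := (Γ : ℤ) - n with hk
        have h0k : (0:ℝ) < (k:ℝ) := by rw [← hval]; exact hf.1
        have h1k : (k:ℝ) < 1 := by rw [← hval]; exact hf.2
        have : (0:ℤ) < k := by exact_mod_cast h0k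
        have : k < 1 := by exact_mod_cast h1k
        omega
      obtain ⟨e₁, hne1, hf1⟩ := h2
      by_cases hp1 : 0 < U t (e₁.1, !e₁.2) ∧ U t (e₁.1, !e₁.2) < 1
      · exact not_extreme_pair t ht e₁ (e₁.1, !e₁.2) (partner_ne e₁) hf1 hp1
          (Or.inl rfl) (Or.inl rfl) hext
      · have hpv1 : U t (e₁.1, !e₁.2) = 0 := by
          rcases hfr01 _ hp1 with h | h
          · exact h
          · exfalso
            have := hpair e₁.1
            rw [pair_eq t e₁, h] at this
            linarith [hf1.1]
        have hps1 : U t (e₁.1, true) + U t (e₁.1, false) < 1 := by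
          rw [pair_eq t e₁, hpv1]
          linarith [hf1.2]
        exact not_extreme_pair t ht e₀ e₁
          (fun h => hne1 (congrArg Prod.fst h).symm) hf hf1
          (Or.inr hps0) (Or.inr hps1) hext

lemma U_comb (a b : ℝ) (x y : (Fin M → ℝ) × (Fin M → ℝ)) (e : Fin M × Bool) :
    U (a • x + b • y) e = a * U x e + b * U y e := by
  obtain ⟨j, bb⟩ := e; cases bb <;> rfl

lemma extreme_of_01 (t : (Fin M → ℝ) × (Fin M → ℝ)) (ht : t ∈ Pset M Γ)
    (h01 : ∀ e, U t e = 0 ∨ U t e = 1) : t ∈ Set.extremePoints ℝ (Pset M Γ) := by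
  refine ⟨ht, ?_⟩
  intro x₁ hx₁ x₂ hx₂ hseg
  obtain ⟨a, b, ha, hb, hab, hz⟩ := hseg
  have key : ∀ e, U x₁ e = U t e ∧ U x₂ e = U t e := by
    intro e
    have h1 := ((mem_Pset_iff x₁).1 hx₁).1 e
    have h2 := ((mem_Pset_iff x₂).1 hx₂).1 e
    have hcomb : a * U x₁ e + b * U x₂ e = U t e := by
      rw [← U_comb a b x₁ x₂ e, hz]
    rcases h01 e with h | h
    · rw [h] at hcomb
      have hu : a * U x₁ e = 0 := by
        nlinarith [mul_nonneg ha.le h1.1, mul_nonneg hb.le h2.1]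
      have hv : b * U x₂ e = 0 := by linarith
      rw [h]
      constructor
      · exact (mul_eq_zero.1 hu).resolve_left (ne_of_gt ha)
      · exact (mul_eq_zero.1 hv).resolve_left (ne_of_gt hb)
    · rw [h] at hcomb
      have hu : a * (1 - U x₁ e) = 0 := by
        nlinarith [mul_nonneg ha.le (by linarith [h1.2] : (0:ℝ) ≤ 1 - U x₁ e),
          mul_nonneg hb.le (by linarith [h2.2] : (0:ℝ) ≤ 1 - U x₂ e)]
      have hv : b * (1 - U x₂ e) = 0 := by nlinarith
      rw [h]
      constructor
      · have := (mul_eq_zero.1 hu).resolve_left (ne_of_gt ha); linarith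
      · have := (mul_eq_zero.1 hv).resolve_left (ne_of_gt hb); linarith
  · rw [← fromU_U x₁, ← fromU_U t]
    exact congrArg fromU (funext fun e => (key e).1)


def dec (f : Fin M → Option Bool) : (Fin M → ℝ) × (Fin M → ℝ) :=
  fromU (fun e => if f e.1 = some e.2 then 1 else 0)

def supp (f : Fin M → Option Bool) : Finset (Fin M) :=
  Finset.univ.filter (fun j => f j ≠ none)

lemma U_dec (f : Fin M → Option Bool) (e : Fin M × Bool) :
    U (dec f) e = if f e.1 = some e.2 then 1 else 0 := congrFun (U_fromU _) e

lemma sum_U_dec (f : Fin M → Option Bool) :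
    ∑ e : Fin M × Bool, U (dec f) e = ((supp f).card : ℝ) := by
  classical
  rw [Fintype.sum_prod_type]
  rw [supp, Finset.card_filter]
  push_cast
  refine Finset.sum_congr rfl fun j _ => ?_
  rw [Fintype.sum_bool, U_dec, U_dec]
  rcases hfj : f j with _ | b
  · simp [hfj]
  · cases b <;> simp [hfj]

lemma dec_mem_iff (f : Fin M → Option Bool) :
    dec f ∈ Pset M Γ ↔ (supp f).card ≤ Γ := by
  rw [mem_Pset_iff]
  constructor
  · rintro ⟨-, -, hs⟩
    rw [sum_U_dec] at hs
    exact_mod_cast hs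
  · intro hc
    refine ⟨fun e => ?_, fun j => ?_, ?_⟩
    · rw [U_dec]; split_ifs <;> norm_num
    · rw [U_dec, U_dec]
      rcases hfj : f j with _ | b
      · simp [hfj]
      · cases b <;> simp [hfj]
    · rw [sum_U_dec]; exact_mod_cast hc

lemma dec_injective : Function.Injective (dec (M := M)) := by
  intro f g h
  have hU : ∀ e : Fin M × Bool, (if f e.1 = some e.2 then (1:ℝ) else 0)
      = if g e.1 = some e.2 then (1:ℝ) else 0 := by
    intro e
    rw [← U_dec, ← U_dec, h]
  have key : ∀ j b, f j = some b ↔ g j = some b := by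
    intro j b
    have := hU (j, b)
    split_ifs at this with h1 h2 h2
    · simp [h1, h2]
    · norm_num at this
    · norm_num at this
    · simp [h1, h2]
  funext j
  rcases hfj : f j with _ | b
  · rcases hgj : g j with _ | c
    · rfl
    · exact absurd ((key j c).2 hgj) (by simp [hfj])
  · exact ((key j b).1 hfj).symm

/-- encode an extreme point / 0-1 point as an `Option Bool` valued function. -/
lemma eq_dec_of_01 (t : (Fin M → ℝ) × (Fin M → ℝ))
    (hpair : ∀ j, U t (j, true) + U t (j, false) ≤ 1)
    (h01 : ∀ e, U t e = 0 ∨ U t e = 1) :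
    t = dec (fun j => if t.1 j = 1 then some true
      else if t.2 j = 1 then some false else none) := by
  set f : Fin M → Option Bool := fun j => if t.1 j = 1 then some true
      else if t.2 j = 1 then some false else none with hf
  rw [← fromU_U t]
  refine congrArg fromU (funext fun e => ?_)
  show U t e = if f e.1 = some e.2 then 1 else 0
  obtain ⟨j, b⟩ := e
  have h1 := h01 (j, true)
  have h2 := h01 (j, false)
  have hp := hpair j
  have hU1 : U t (j, true) = t.1 j := rfl
  have hU2 : U t (j, false) = t.2 j := rfl
  rw [hU1] at h1
  rw [hU2] at h2
  rw [hU1, hU2] at hp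
  cases b
  · -- value of t.2 j
    show U t (j, false) = _
    rw [hU2]
    rcases h2 with h | h
    · rcases h1 with h' | h'
      · simp [hf, h, h']
      · simp [hf, h, h']
    · have h1' : t.1 j = 0 := by
        rcases h1 with h' | h'
        · exact h'
        · exfalso; rw [h, h'] at hp; norm_num at hp
      simp [hf, h, h1']
  · show U t (j, true) = _
    rw [hU1]
    rcases h1 with h | h
    · rcases h2 with h' | h'
      · simp [hf, h, h']
      · simp [hf, h, h']
    · simp [hf, h]

lemma extremePoints_eq :
    Set.extremePoints ℝ (Pset M Γ) =
      dec '' {f : Fin M → Option Bool | (supp f).card ≤ Γ} := by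
  ext t
  constructor
  · intro hext
    have h01 := extreme_01 t hext
    have ht := hext.1
    obtain ⟨-, hpair, -⟩ := (mem_Pset_iff t).1 ht
    have heq := eq_dec_of_01 t hpair h01
    refine ⟨_, ?_, heq.symm⟩
    have : dec (fun j => if t.1 j = 1 then some true
        else if t.2 j = 1 then some false else none) ∈ Pset M Γ := heq ▸ ht
    exact (dec_mem_iff _).1 this
  · rintro ⟨f, hf, rfl⟩
    refine extreme_of_01 _ ((dec_mem_iff f).2 hf) fun e => ?_
    rw [U_dec]
    split_ifs <;> simp

lemma tight_eq :
    {t : (Fin M → ℝ) × (Fin M → ℝ) | t ∈ Pset M Γ ∧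
        (∀ j, (t.1 j = 0 ∨ t.1 j = 1) ∧ (t.2 j = 0 ∨ t.2 j = 1)) ∧
        (∑ j, (t.1 j + t.2 j)) = (Γ : ℝ)} =
      dec '' {f : Fin M → Option Bool | (supp f).card = Γ} := by
  ext t
  constructor
  · rintro ⟨ht, h01', hsum⟩
    have h01 : ∀ e, U t e = 0 ∨ U t e = 1 := by
      intro e
      obtain ⟨j, b⟩ := e
      cases b
      · exact (h01' j).2
      · exact (h01' j).1
    obtain ⟨-, hpair, -⟩ := (mem_Pset_iff t).1 ht
    have heq := eq_dec_of_01 t hpair h01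
    refine ⟨_, ?_, heq.symm⟩
    show (supp _).card = Γ
    have hs : ∑ e : Fin M × Bool, U t e = (Γ : ℝ) := by rw [sum_U]; exact hsum
    rw [heq, sum_U_dec] at hs
    exact_mod_cast hs
  · rintro ⟨f, hf, rfl⟩
    refine ⟨(dec_mem_iff f).2 hf.le, fun j => ?_, ?_⟩
    · constructor
      · have := U_dec f (j, true)
        rw [show U (dec f) (j, true) = (dec f).1 j from rfl] at this
        rw [this]; split_ifs <;> simp
      · have := U_dec f (j, false)
        rw [show U (dec f) (j, false) = (dec f).2 j from rfl] at this
        rw [this]; split_ifs <;> simp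
    · rw [← sum_U, sum_U_dec, hf]


lemma card_fiber (s : Finset (Fin M)) :
    (Finset.univ.filter fun f : Fin M → Option Bool => supp f = s).card = 2 ^ s.card := by
  classical
  rw [show (2 : ℕ) ^ s.card = (Finset.univ : Finset (↥s → Bool)).card by
    rw [Finset.card_univ, Fintype.card_fun]
    simp [Fintype.card_coe]]
  refine Finset.card_bij' (fun f _ => fun i => (f i.1).getD true)
    (fun g _ => fun k => if h : k ∈ s then some (g ⟨k, h⟩) else none) ?_ ?_ ?_ ?_
  · intro f hf
    exact Finset.mem_univ _
  · intro g hg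
    rw [Finset.mem_filter]
    refine ⟨Finset.mem_univ _, ?_⟩
    ext k
    rw [supp, Finset.mem_filter]
    constructor
    · rintro ⟨-, hk⟩
      by_contra hks
      rw [dif_neg hks] at hk
      exact hk rfl
    · intro hk
      exact ⟨Finset.mem_univ _, by rw [dif_pos hk]; simp⟩
  · intro f hf
    rw [Finset.mem_filter] at hf
    funext k
    dsimp only
    by_cases hk : k ∈ s
    · rw [dif_pos hk]
      have : f k ≠ none := by
        rw [← hf.2] at hk
        rw [supp, Finset.mem_filter] at hk
        exact hk.2
      rcases hfk : f k with _ | b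
      · exact absurd hfk this
      · simp [hfk]
    · rw [dif_neg hk]
      rw [← hf.2] at hk
      rw [supp, Finset.mem_filter] at hk
      push_neg at hk
      exact (hk (Finset.mem_univ _)).symm
  · intro g hg
    funext i
    dsimp only
    rw [dif_pos i.2]
    simp

lemma card_exact (k : ℕ) :
    (Finset.univ.filter fun f : Fin M → Option Bool => (supp f).card = k).card
      = M.choose k * 2 ^ k := by
  classical
  rw [Finset.card_eq_sum_card_fiberwise
    (f := fun f => supp f) (t := Finset.powersetCard k Finset.univ)
    (fun f hf => by
      rw [Finset.mem_coe, Finset.mem_powersetCard_univ]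
      exact (Finset.mem_filter.1 hf).2)]
  have h1 : ∀ s ∈ Finset.powersetCard k Finset.univ,
      ((Finset.univ.filter fun f : Fin M → Option Bool => (supp f).card = k).filter
        fun f => supp f = s).card = 2 ^ k := by
    intro s hs
    rw [Finset.mem_powersetCard_univ] at hs
    rw [Finset.filter_filter]
    have : ∀ f : Fin M → Option Bool, ((supp f).card = k ∧ supp f = s) ↔ supp f = s := by
      intro f
      constructor
      · exact And.right
      · intro h
        exact ⟨by rw [h, hs], h⟩
    rw [show (Finset.univ.filter fun f : Fin M → Option Bool => (supp f).card = k ∧ supp f = s)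
        = Finset.univ.filter fun f : Fin M → Option Bool => supp f = s from
      Finset.filter_congr fun f _ => by rw [this f]]
    rw [card_fiber, hs]
  rw [Finset.sum_congr rfl h1, Finset.sum_const, Finset.card_powersetCard, Finset.card_univ,
    Fintype.card_fin, smul_eq_mul]

lemma card_le (Γ : ℕ) :
    (Finset.univ.filter fun f : Fin M → Option Bool => (supp f).card ≤ Γ).card
      = ∑ j ∈ Finset.range (Γ + 1), M.choose j * 2 ^ j := by
  classical
  rw [Finset.card_eq_sum_card_fiberwise
    (f := fun f => (supp f).card) (t := Finset.range (Γ + 1))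
    (fun f hf => Finset.mem_range.2 (Nat.lt_succ_of_le (Finset.mem_filter.1 hf).2))]
  refine Finset.sum_congr rfl fun j hj => ?_
  rw [Finset.mem_range] at hj
  rw [Finset.filter_filter]
  rw [show (Finset.univ.filter fun f : Fin M → Option Bool => (supp f).card ≤ Γ ∧ (supp f).card = j)
      = Finset.univ.filter fun f : Fin M → Option Bool => (supp f).card = j from
    Finset.filter_congr fun f _ => by
      constructor
      · exact fun h => h.2
      · exact fun h => ⟨by omega, h⟩]
  exact card_exact j


end BPEC

open BPEC in
/-- counting extreme points of the integer-budget polytope: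
`#(extreme points of P_Γ) = Σ_{j=0}^{Γ} C(M,j)·2^j`; in particular for `Γ = 1`
this is `2M + 1`, and the number of 0-1 points of `P_Γ` with the budget
constraint exactly tight is `C(M,Γ)·2^Γ`. -/
theorem budget_polytope_extreme_point_count (M : ℕ) (Γ : ℕ) (hΓ : Γ ≤ M)
    (P : Set ((Fin M → ℝ) × (Fin M → ℝ)))
    (hP : P = {t | (∀ j, t.1 j ∈ Set.Icc (0:ℝ) 1) ∧ (∀ j, t.2 j ∈ Set.Icc (0:ℝ) 1) ∧
      (∀ j, t.1 j + t.2 j ≤ 1) ∧ (∑ j, (t.1 j + t.2 j)) ≤ (Γ : ℝ)}) :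
    (Set.extremePoints ℝ P).ncard = ∑ j ∈ Finset.range (Γ + 1), Nat.choose M j * 2 ^ j ∧
    (Γ = 1 → (Set.extremePoints ℝ P).ncard = 2 * M + 1) ∧
    {t | t ∈ P ∧ (∀ j, (t.1 j = 0 ∨ t.1 j = 1) ∧ (t.2 j = 0 ∨ t.2 j = 1)) ∧
        (∑ j, (t.1 j + t.2 j)) = (Γ : ℝ)}.ncard = Nat.choose M Γ * 2 ^ Γ := by
  classical
  have hP' : P = Pset M Γ := hP
  subst hP'
  have key1 : (Set.extremePoints ℝ (Pset M Γ)).ncard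
      = ∑ j ∈ Finset.range (Γ + 1), Nat.choose M j * 2 ^ j := by
    rw [extremePoints_eq, Set.ncard_image_of_injective _ dec_injective]
    have hcoe : {f : Fin M → Option Bool | (supp f).card ≤ Γ}
        = ↑(Finset.univ.filter fun f : Fin M → Option Bool => (supp f).card ≤ Γ) := by
      ext f; simp
    rw [hcoe, Set.ncard_coe_finset, card_le Γ]
  have key3 : {t | t ∈ Pset M Γ ∧ (∀ j, (t.1 j = 0 ∨ t.1 j = 1) ∧ (t.2 j = 0 ∨ t.2 j = 1)) ∧
        (∑ j, (t.1 j + t.2 j)) = (Γ : ℝ)}.ncard = Nat.choose M Γ * 2 ^ Γ := by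
    rw [tight_eq, Set.ncard_image_of_injective _ dec_injective]
    have hcoe : {f : Fin M → Option Bool | (supp f).card = Γ}
        = ↑(Finset.univ.filter fun f : Fin M → Option Bool => (supp f).card = Γ) := by
      ext f; simp
    rw [hcoe, Set.ncard_coe_finset, card_exact Γ]
  refine ⟨key1, fun h => ?_, key3⟩
  subst h
  rw [key1]
  simp [Finset.sum_range_succ]
  omega
end

section
/- If Z : ℝᵐ → ℝ is the value function of the phase-one LP above (Z(s) = min{1ᵀ(l⁺+l⁻) : Ax + l⁺ − l⁻ = Ds + d, l⁺, l⁻ ≥ 0}), then Z is nonnegative, convex, and Lipschitz continuous with Lipschitz constant ‖D‖ (operator norm with ℓ∞-bounded duals: |Z(s) − Z(s')| ≤ Σᵢ |(D(s−s'))ᵢ| = ‖D(s−s')‖₁). -/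
/-!
The pairs `(b, v)` such that `v` is the cost of a feasible point of the phase-one LP with
right-hand side `b` form a convex cone, so the infimal cost is convex in `b`, hence in `s`.
A feasible point for `c` becomes one for `b` by adding the positive and negative parts of `b - c`
to `l⁺` and `l⁻`, which costs `‖b - c‖₁`; this gives the Lipschitz bound.
-/

open Matrix

theorem IsGLB.le_add_of_forall_add_mem {α : Type*} [AddCommGroup α] [PartialOrder α]
    [IsOrderedAddMonoid α] {s t : Set α} {a b c : α} (ha : IsGLB s a) (hb : IsGLB t b)
    (h : ∀ v ∈ t, v + c ∈ s) : a ≤ b + c :=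
  sub_le_iff_le_add.1 <| hb.2 fun v hv => sub_le_iff_le_add.2 <| ha.1 (h v hv)

theorem convexOn_univ_of_forall_isGLB {E : Type*} [AddCommMonoid E] [Module ℝ E]
    {S : E → Set ℝ} {f : E → ℝ} (hf : ∀ x, IsGLB (S x) (f x))
    (hS : ∀ ⦃x y : E⦄ ⦃a b v w : ℝ⦄, 0 ≤ a → 0 ≤ b → a + b = 1 → v ∈ S x → w ∈ S y →
      a * v + b * w ∈ S (a • x + b • y)) :
    ConvexOn ℝ Set.univ f := by
  refine ⟨convex_univ, fun x _ y _ a b ha hb hab => ?_⟩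
  have hglb := ((hf x).mul_left ha).add ((hf y).mul_left hb)
  refine hglb.mono (hf _) ?_
  rintro _ ⟨_, ⟨v, hv, rfl⟩, _, ⟨w, hw, rfl⟩, rfl⟩
  exact hS ha hb hab hv hw

section PhaseOne

variable {ι κ : Type*} [Fintype ι] [Fintype κ] (A : Matrix ι κ ℝ)

def phaseOneCosts (b : ι → ℝ) : Set ℝ :=
  {v | ∃ (x : κ → ℝ) (lp lm : ι → ℝ),
    0 ≤ lp ∧ 0 ≤ lm ∧ A *ᵥ x + lp - lm = b ∧ v = ∑ i, (lp i + lm i)}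

variable {A}

theorem nonneg_of_mem_phaseOneCosts {b : ι → ℝ} {v : ℝ} (hv : v ∈ phaseOneCosts A b) :
    0 ≤ v := by
  obtain ⟨x, lp, lm, hlp, hlm, -, rfl⟩ := hv
  exact Finset.sum_nonneg fun i _ => add_nonneg (hlp i) (hlm i)

theorem smul_add_smul_mem_phaseOneCosts {b c : ι → ℝ} {s t v w : ℝ} (hs : 0 ≤ s) (ht : 0 ≤ t)
    (hv : v ∈ phaseOneCosts A b) (hw : w ∈ phaseOneCosts A c) :
    s * v + t * w ∈ phaseOneCosts A (s • b + t • c) := by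
  obtain ⟨x, lp, lm, hlp, hlm, hb, rfl⟩ := hv
  obtain ⟨y, lp', lm', hlp', hlm', hc, rfl⟩ := hw
  refine ⟨s • x + t • y, s • lp + t • lp', s • lm + t • lm', by positivity, by positivity, ?_, ?_⟩
  · rw [← hb, ← hc, mulVec_add, mulVec_smul, mulVec_smul]
    module
  · simp only [Pi.add_apply, Pi.smul_apply, smul_eq_mul, Finset.mul_sum, ← Finset.sum_add_distrib]
    exact Finset.sum_congr rfl fun i _ => by ring

theorem add_sum_abs_sub_mem_phaseOneCosts {b c : ι → ℝ} {v : ℝ} (hv : v ∈ phaseOneCosts A c) :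
    v + ∑ i, |(b - c) i| ∈ phaseOneCosts A b := by
  obtain ⟨x, lp, lm, hlp, hlm, hc, rfl⟩ := hv
  refine ⟨x, lp + (b - c)⁺, lm + (b - c)⁻, by positivity, by positivity, ?_, ?_⟩
  · calc A *ᵥ x + (lp + (b - c)⁺) - (lm + (b - c)⁻)
        = (A *ᵥ x + lp - lm) + ((b - c)⁺ - (b - c)⁻) := by abel
      _ = b := by rw [hc, posPart_sub_negPart, add_sub_cancel]
  · simp only [Pi.add_apply, Pi.posPart_apply, Pi.negPart_apply, ← posPart_add_negPart,
      ← Finset.sum_add_distrib]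
    exact Finset.sum_congr rfl fun i _ => by ring

end PhaseOne

/-- the phase-one LP value function
`Z s = min {1ᵀ(l⁺+l⁻) : Ax + l⁺ − l⁻ = D s + d, l⁺,l⁻ ≥ 0}` is nonnegative,
convex, and Lipschitz in the sense `|Z s − Z s'| ≤ ‖D(s−s')‖₁`. -/
theorem phase_one_value_convex_lipschitz (p n m : ℕ)
    (A : Matrix (Fin p) (Fin n) ℝ) (D : Matrix (Fin p) (Fin m) ℝ)
    (d : Fin p → ℝ) (Z : (Fin m → ℝ) → ℝ)
    (hZ : ∀ s, IsGLB {v | ∃ (x : Fin n → ℝ) (lp lm : Fin p → ℝ),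
      (∀ i, 0 ≤ lp i) ∧ (∀ i, 0 ≤ lm i) ∧
      (∀ i, A.mulVec x i + lp i - lm i = D.mulVec s i + d i) ∧
      v = ∑ i, (lp i + lm i)} (Z s)) :
    (∀ s, 0 ≤ Z s) ∧ ConvexOn ℝ Set.univ Z ∧
      ∀ s s', |Z s - Z s'| ≤ ∑ i, |D.mulVec (s - s') i| := by
  have hS : ∀ s, IsGLB (phaseOneCosts A (D *ᵥ s + d)) (Z s) := fun s => by
    convert hZ s using 1
    ext v
    simp only [phaseOneCosts, Pi.le_def, funext_iff, Pi.add_apply, Pi.sub_apply, Pi.zero_apply]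
  have hlip : ∀ s s', Z s ≤ Z s' + ∑ i, |(D *ᵥ (s - s')) i| := fun s s' =>
    (hS s).le_add_of_forall_add_mem (hS s') fun v hv => by
      simpa only [add_sub_add_right_eq_sub, ← mulVec_sub] using
        add_sum_abs_sub_mem_phaseOneCosts (b := D *ᵥ s + d) hv
  refine ⟨fun s => (hS s).2 fun _ => nonneg_of_mem_phaseOneCosts,
    convexOn_univ_of_forall_isGLB hS fun s s' a b v w ha hb hab hv hw => ?_, fun s s' => ?_⟩
  · convert smul_add_smul_mem_phaseOneCosts ha hb hv hw using 2
    rw [mulVec_add, mulVec_smul, mulVec_smul]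
    linear_combination (norm := module) -(hab • d)
  · have hsymm : ∑ i, |(D *ᵥ (s' - s)) i| = ∑ i, |(D *ᵥ (s - s')) i| := by
      simp only [← neg_sub s, mulVec_neg, Pi.neg_apply, abs_neg]
    exact abs_sub_le_iff.2 ⟨by linarith [hlip s s'], by linarith [hlip s' s]⟩
end

section
/- Validity of the sine envelope used in the QC relaxation: for θ ∈ [−θᵘ, θᵘ] with 0 < θᵘ ≤ π/2, |sin θ − cos(θᵘ/2)·θ| ≤ sin(θᵘ/2) − (θᵘ/2)cos(θᵘ/2); i.e., sin θ lies within the band of slope cos(θᵘ/2) through the origin with offset sin(θᵘ/2) − (θᵘ/2)cos(θᵘ/2) ≥ 0. -/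
open Real Set

private lemma env_mono (φ : ℝ) (hφ0 : 0 < φ) (hφ4 : φ ≤ π / 4) :
    MonotoneOn (fun t => Real.sin t - Real.cos φ * t) (Set.Icc 0 φ) := by
  have hπ : (0:ℝ) < π := Real.pi_pos
  apply monotoneOn_of_deriv_nonneg (convex_Icc _ _)
  · exact (Real.continuous_sin.sub (continuous_const.mul continuous_id)).continuousOn
  · intro t _
    exact ((Real.hasDerivAt_sin t).sub ((hasDerivAt_id t).const_mul (Real.cos φ))).differentiableAt.differentiableWithinAt
  · intro t ht
    rw [interior_Icc] at ht
    have hd : HasDerivAt (fun t => Real.sin t - Real.cos φ * t) (Real.cos t - Real.cos φ * 1) t :=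
      (Real.hasDerivAt_sin t).sub ((hasDerivAt_id t).const_mul (Real.cos φ))
    rw [hd.deriv]
    have : Real.cos φ ≤ Real.cos t :=
      Real.cos_le_cos_of_nonneg_of_le_pi (le_of_lt ht.1) (by linarith) (le_of_lt ht.2)
    linarith

private lemma env_anti (φ : ℝ) (hφ0 : 0 < φ) (hφ4 : φ ≤ π / 4) :
    AntitoneOn (fun t => Real.sin t - Real.cos φ * t) (Set.Icc φ (2*φ)) := by
  have hπ : (0:ℝ) < π := Real.pi_pos
  apply antitoneOn_of_deriv_nonpos (convex_Icc _ _)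
  · exact (Real.continuous_sin.sub (continuous_const.mul continuous_id)).continuousOn
  · intro t _
    exact ((Real.hasDerivAt_sin t).sub ((hasDerivAt_id t).const_mul (Real.cos φ))).differentiableAt.differentiableWithinAt
  · intro t ht
    rw [interior_Icc] at ht
    have hd : HasDerivAt (fun t => Real.sin t - Real.cos φ * t) (Real.cos t - Real.cos φ * 1) t :=
      (Real.hasDerivAt_sin t).sub ((hasDerivAt_id t).const_mul (Real.cos φ))
    rw [hd.deriv]
    have : Real.cos t ≤ Real.cos φ :=
      Real.cos_le_cos_of_nonneg_of_le_pi (le_of_lt hφ0) (by linarith [ht.2]) (le_of_lt ht.1)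
    linarith

private lemma tan_add_two_sin (x : ℝ) (hx : 0 ≤ x) (hx4 : x ≤ π / 4) :
    3 * x ≤ Real.tan x + 2 * Real.sin x := by
  have hπ : (0:ℝ) < π := Real.pi_pos
  have hcos : ∀ t ∈ Set.Icc (0:ℝ) (π/4), 0 < Real.cos t := by
    intro t ht
    exact Real.cos_pos_of_mem_Ioo ⟨by linarith [ht.1], by linarith [ht.2]⟩
  have hmono : MonotoneOn (fun t => Real.tan t + 2 * Real.sin t - 3 * t) (Set.Icc 0 (π/4)) := by
    apply monotoneOn_of_deriv_nonneg (convex_Icc _ _)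
    · intro t ht
      exact (((Real.continuousAt_tan.2 (hcos t ht).ne').add
        (Real.continuous_sin.continuousAt.const_mul 2)).sub
        ((continuous_const.mul continuous_id).continuousAt)).continuousWithinAt
    · intro t ht
      rw [interior_Icc] at ht
      have hct : Real.cos t ≠ 0 := (hcos t ⟨le_of_lt ht.1, le_of_lt ht.2⟩).ne'
      exact (((Real.hasDerivAt_tan hct).add ((Real.hasDerivAt_sin t).const_mul 2)).sub
        ((hasDerivAt_id t).const_mul 3)).differentiableAt.differentiableWithinAt
    · intro t ht
      rw [interior_Icc] at ht
      have hct : 0 < Real.cos t := hcos t ⟨le_of_lt ht.1, le_of_lt ht.2⟩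
      have hd : HasDerivAt (fun t => Real.tan t + 2 * Real.sin t - 3 * t)
          (1 / Real.cos t ^ 2 + 2 * Real.cos t - 3 * 1) t :=
        ((Real.hasDerivAt_tan hct.ne').add ((Real.hasDerivAt_sin t).const_mul 2)).sub
          ((hasDerivAt_id t).const_mul 3)
      rw [hd.deriv]
      set c := Real.cos t with hc
      have hc1 : c ≤ 1 := Real.cos_le_one t
      have key : 0 ≤ 1 + 2*c^3 - 3*c^2 := by nlinarith [sq_nonneg (c - 1)]
      have heq : 1 / c ^ 2 + 2 * c - 3 * 1 = (1 + 2*c^3 - 3*c^2) / c^2 := by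
        field_simp
      rw [heq]
      positivity
  have h0 : (0:ℝ) ∈ Set.Icc (0:ℝ) (π/4) := ⟨le_refl _, by linarith⟩
  have hx' : x ∈ Set.Icc (0:ℝ) (π/4) := ⟨hx, hx4⟩
  have := hmono h0 hx' hx
  simp only [Real.tan_zero, Real.sin_zero] at this
  linarith

/-- the sine envelope used in the QC relaxation: for
`0 < θᵘ ≤ π/2` and `θ ∈ [−θᵘ, θᵘ]`,
`|sin θ − cos(θᵘ/2)·θ| ≤ sin(θᵘ/2) − (θᵘ/2)·cos(θᵘ/2)`. -/
theorem sin_envelope_valid (θu θ : ℝ) (h0 : 0 < θu) (hu : θu ≤ π / 2)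
    (hθ : θ ∈ Set.Icc (-θu) θu) :
    |Real.sin θ - Real.cos (θu / 2) * θ| ≤
      Real.sin (θu / 2) - (θu / 2) * Real.cos (θu / 2) := by
  have hπ : (0:ℝ) < π := Real.pi_pos
  obtain ⟨hl, hr⟩ := hθ
  set φ := θu / 2 with hφdef
  have hφ0 : 0 < φ := by simp only [hφdef]; linarith
  have hφ4 : φ ≤ π / 4 := by simp only [hφdef]; linarith
  have hc0 : 0 < Real.cos φ := Real.cos_pos_of_mem_Ioo ⟨by linarith, by linarith⟩
  have hmono := env_mono φ hφ0 hφ4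
  have hanti := env_anti φ hφ0 hφ4
  -- offset nonneg: sin φ - cos φ * φ ≥ 0
  have hoff : 0 ≤ Real.sin φ - Real.cos φ * φ := by
    have := hmono (Set.mem_Icc.2 ⟨le_refl 0, le_of_lt hφ0⟩)
      (Set.mem_Icc.2 ⟨le_of_lt hφ0, le_refl φ⟩) (le_of_lt hφ0)
    simpa using this
  -- key inequality: 3 φ cos φ ≤ sin φ + 2 sin φ cos φ
  have hkey : 3 * φ * Real.cos φ ≤ Real.sin φ + 2 * Real.sin φ * Real.cos φ := by
    have h1 := tan_add_two_sin φ (le_of_lt hφ0) hφ4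
    have h2 := mul_le_mul_of_nonneg_right h1 (le_of_lt hc0)
    rw [Real.tan_eq_sin_div_cos] at h2
    have : (Real.sin φ / Real.cos φ + 2 * Real.sin φ) * Real.cos φ
        = Real.sin φ + 2 * Real.sin φ * Real.cos φ := by
      field_simp
    rw [this] at h2
    linarith
  have main : ∀ t, 0 ≤ t → t ≤ 2 * φ →
      |Real.sin t - Real.cos φ * t| ≤ Real.sin φ - φ * Real.cos φ := by
    intro t ht0 ht2
    rw [abs_le]
    constructor
    · rcases le_total t φ with h | h
      · have := hmono (Set.mem_Icc.2 ⟨le_refl 0, le_of_lt hφ0⟩)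
          (Set.mem_Icc.2 ⟨ht0, h⟩) ht0
        simp at this
        linarith
      · have := hanti (Set.mem_Icc.2 ⟨h, ht2⟩)
          (Set.mem_Icc.2 ⟨by linarith, le_refl _⟩) ht2
        simp only at this
        rw [Real.sin_two_mul] at this
        nlinarith
    · rcases le_total t φ with h | h
      · have := hmono (Set.mem_Icc.2 ⟨ht0, h⟩)
          (Set.mem_Icc.2 ⟨le_of_lt hφ0, le_refl φ⟩) h
        simp only at this
        linarith
      · have := hanti (Set.mem_Icc.2 ⟨le_refl _, by linarith⟩)
          (Set.mem_Icc.2 ⟨h, ht2⟩) h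
        simp only at this
        linarith
  rcases le_total 0 θ with h | h
  · exact main θ h (by linarith)
  · have hm := main (-θ) (by linarith) (by linarith)
    have heq : Real.sin (-θ) - Real.cos φ * (-θ) = -(Real.sin θ - Real.cos φ * θ) := by
      rw [Real.sin_neg]; ring
    rw [heq, abs_neg] at hm
    exact hm
end
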